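/- Under the hypotheses of the previous setting (commutative K-algebra H with structure constants g_{ij}^k, symmetric invertible γ with Σ_e γ_{ije}γ^{ef} = g_{ij}^f, and totally symmetric Γ_{ijk} ∈ K), the product T_i * T_j := T_i·T_j + Σ_{e,f} Γ_{ije}·γ^{ef}·T_f coincides with the product T_i * T_j = Σ_{e,f} (γ_{ije}+Γ_{ije})·γ^{ef}·T_f; in particular, if Φ_{ijk} := γ_{ijk} + Γ_{ijk} satisfies WDVV with respect to γ, then * is an associative commutative product on H. -/
import Mathlib

theorem sum3comm' {K : Type*} [AddCommMonoid K] {n : ℕ}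
    (F : Fin n → Fin n → Fin n → K) :
    (∑ p : Fin n, ∑ e : Fin n, ∑ f : Fin n, F p e f)
      = ∑ f : Fin n, ∑ e : Fin n, ∑ p : Fin n, F p e f :=
  calc (∑ p : Fin n, ∑ e : Fin n, ∑ f : Fin n, F p e f)
      = ∑ p : Fin n, ∑ f : Fin n, ∑ e : Fin n, F p e f :=
        Finset.sum_congr rfl fun _ _ => Finset.sum_comm
    _ = ∑ f : Fin n, ∑ p : Fin n, ∑ e : Fin n, F p e f := Finset.sum_comm
    _ = ∑ f : Fin n, ∑ e : Fin n, ∑ p : Fin n, F p e f :=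
        Finset.sum_congr rfl fun _ _ => Finset.sum_comm

theorem sum4comm' {K : Type*} [AddCommMonoid K] {n : ℕ}
    (F : Fin n → Fin n → Fin n → Fin n → K) :
    (∑ a : Fin n, ∑ b : Fin n, ∑ x : Fin n, ∑ y : Fin n, F a b x y)
      = ∑ x : Fin n, ∑ y : Fin n, ∑ a : Fin n, ∑ b : Fin n, F a b x y :=
  calc (∑ a : Fin n, ∑ b : Fin n, ∑ x : Fin n, ∑ y : Fin n, F a b x y)
      = ∑ a : Fin n, ∑ y : Fin n, ∑ x : Fin n, ∑ b : Fin n, F a b x y :=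
        Finset.sum_congr rfl fun a _ => sum3comm' (fun b x y => F a b x y)
    _ = ∑ x : Fin n, ∑ y : Fin n, ∑ a : Fin n, ∑ b : Fin n, F a b x y :=
        sum3comm' (fun a y x => ∑ b : Fin n, F a b x y)

/-- under the compatibility `∑ e, γ_{ije} γ^{ef} = g_{ij}^f`, the
product `T_i * T_j := T_i·T_j + ∑ e f, Γ_{ije} γ^{ef} T_f` coincides with
`T_i * T_j = ∑ e f, (γ_{ije} + Γ_{ije}) γ^{ef} T_f`; and if `Φ = γ₃ + Γ`
satisfies WDVV w.r.t. `γ`, then `*` is associative and commutative. -/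
theorem stmt10 {K : Type*} [CommRing K] [Algebra ℚ K] {r : ℕ}
    (g : Fin (r + 1) → Fin (r + 1) → Fin (r + 1) → K)
    (hgcomm : ∀ i j k, g i j k = g j i k)
    (hgassoc : ∀ i j k m,
      (∑ e : Fin (r + 1), g i j e * g e k m) = ∑ e : Fin (r + 1), g j k e * g e i m)
    (γ γinv : Matrix (Fin (r + 1)) (Fin (r + 1)) K)
    (hγsymm : ∀ i j, γ i j = γ j i)
    (hinv : γ * γinv = 1) (hinv' : γinv * γ = 1)
    (γ3 : Fin (r + 1) → Fin (r + 1) → Fin (r + 1) → K)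
    (hγ3 : ∀ i j e, γ3 i j e = ∑ k : Fin (r + 1), g i j k * γ k e)
    (hcompat : ∀ i j f, (∑ e : Fin (r + 1), γ3 i j e * γinv e f) = g i j f)
    (Γ : Fin (r + 1) → Fin (r + 1) → Fin (r + 1) → K)
    (hΓsymm : ∀ i j k, Γ i j k = Γ j i k ∧ Γ i j k = Γ i k j)
    -- structure constants of the product `*`
    (c : Fin (r + 1) → Fin (r + 1) → Fin (r + 1) → K)
    (hc : ∀ i j f, c i j f = g i j f + ∑ e : Fin (r + 1), Γ i j e * γinv e f)
    -- the bilinear extension of `*` to `H = Fin (r+1) → K`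
    (mul : (Fin (r + 1) → K) → (Fin (r + 1) → K) → (Fin (r + 1) → K))
    (hmul : ∀ a b f, mul a b f =
      ∑ i : Fin (r + 1), ∑ j : Fin (r + 1), a i * b j * c i j f) :
    -- the two descriptions of the product coincide
    (∀ i j f, c i j f = ∑ e : Fin (r + 1), (γ3 i j e + Γ i j e) * γinv e f) ∧
    -- and WDVV for Φ := γ₃ + Γ implies associativity and commutativity of `*`
    ((∀ i j k l : Fin (r + 1),
        (∑ e : Fin (r + 1), ∑ f : Fin (r + 1),
          (γ3 i j e + Γ i j e) * γinv e f * (γ3 f k l + Γ f k l)) =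
        (∑ e : Fin (r + 1), ∑ f : Fin (r + 1),
          (γ3 j k e + Γ j k e) * γinv e f * (γ3 f i l + Γ f i l))) →
      (∀ a b cc, mul (mul a b) cc = mul a (mul b cc)) ∧ (∀ a b, mul a b = mul b a)) := by
  have c_eq : ∀ i j f, c i j f = ∑ e : Fin (r + 1), (γ3 i j e + Γ i j e) * γinv e f := by
    intro i j f
    rw [hc, ← hcompat i j f, ← Finset.sum_add_distrib]
    exact Finset.sum_congr rfl fun e _ => by ring
  have hΦsymm : ∀ i j e, γ3 i j e + Γ i j e = γ3 j i e + Γ j i e := by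
    intro i j e
    rw [hγ3, hγ3, (hΓsymm i j e).1]
    congr 1
    exact Finset.sum_congr rfl fun k _ => by rw [hgcomm]
  have ccomm : ∀ i j f, c i j f = c j i f := by
    intro i j f
    rw [c_eq, c_eq]
    exact Finset.sum_congr rfl fun e _ => by rw [hΦsymm]
  refine ⟨c_eq, fun hw => ⟨?_, ?_⟩⟩
  · -- associativity
    have key : ∀ i j k l, (∑ p : Fin (r + 1), c i j p * c p k l)
        = ∑ p : Fin (r + 1), c j k p * c p i l := by
      intro i j k l
      have expand : ∀ i' j' k', (∑ p : Fin (r + 1), c i' j' p * c p k' l) =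
          ∑ f : Fin (r + 1), (∑ e : Fin (r + 1), ∑ p : Fin (r + 1),
            (γ3 i' j' e + Γ i' j' e) * γinv e p * (γ3 p k' f + Γ p k' f)) * γinv f l := by
        intro i' j' k'
        simp only [c_eq, Finset.sum_mul, Finset.mul_sum]
        refine (sum3comm' _).trans (Finset.sum_comm.trans ?_)
        exact Finset.sum_congr rfl fun f _ => Finset.sum_congr rfl fun e _ =>
          Finset.sum_congr rfl fun p _ => by ring
      rw [expand i j k, expand j k i]
      exact Finset.sum_congr rfl fun f _ => by rw [hw i j k f]
    intro a b cc
    funext l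
    have step : ∀ p q j, (∑ i : Fin (r + 1), a p * b q * cc j * (c p q i * c i j l))
        = ∑ i : Fin (r + 1), a p * b q * cc j * (c q j i * c i p l) := by
      intro p q j
      rw [← Finset.mul_sum, ← Finset.mul_sum, key p q j l]
    calc mul (mul a b) cc l
        = ∑ i : Fin (r+1), ∑ j : Fin (r+1), ∑ p : Fin (r+1), ∑ q : Fin (r+1),
            a p * b q * c p q i * cc j * c i j l := by
          simp only [hmul, Finset.sum_mul]
      _ = ∑ p : Fin (r+1), ∑ q : Fin (r+1), ∑ i : Fin (r+1), ∑ j : Fin (r+1),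
            a p * b q * c p q i * cc j * c i j l := sum4comm' _
      _ = ∑ p : Fin (r+1), ∑ q : Fin (r+1), ∑ j : Fin (r+1), ∑ i : Fin (r+1),
            a p * b q * cc j * (c p q i * c i j l) :=
          Finset.sum_congr rfl fun p _ => Finset.sum_congr rfl fun q _ =>
            Finset.sum_comm.trans (Finset.sum_congr rfl fun j _ =>
              Finset.sum_congr rfl fun i _ => by ring)
      _ = ∑ p : Fin (r+1), ∑ q : Fin (r+1), ∑ j : Fin (r+1), ∑ i : Fin (r+1),
            a p * b q * cc j * (c q j i * c i p l) :=
          Finset.sum_congr rfl fun p _ => Finset.sum_congr rfl fun q _ =>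
            Finset.sum_congr rfl fun j _ => step p q j
      _ = ∑ p : Fin (r+1), ∑ q : Fin (r+1), ∑ j : Fin (r+1), ∑ i : Fin (r+1),
            a p * (b q * cc j * c q j i) * c p i l :=
          Finset.sum_congr rfl fun p _ => Finset.sum_congr rfl fun q _ =>
            Finset.sum_congr rfl fun j _ => Finset.sum_congr rfl fun i _ => by
              rw [ccomm i p]; ring
      _ = ∑ p : Fin (r+1), ∑ i : Fin (r+1), ∑ q : Fin (r+1), ∑ j : Fin (r+1),
            a p * (b q * cc j * c q j i) * c p i l :=
          Finset.sum_congr rfl fun p _ =>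
            (sum3comm' (fun q j i => a p * (b q * cc j * c q j i) * c p i l)).trans
            (Finset.sum_congr rfl fun _ _ => Finset.sum_comm)
      _ = mul a (mul b cc) l := by
          simp only [hmul, Finset.mul_sum, Finset.sum_mul]
  · -- commutativity
    intro a b
    funext f
    rw [hmul, hmul]
    refine Finset.sum_comm.trans ?_
    exact Finset.sum_congr rfl fun j _ => Finset.sum_congr rfl fun i _ => by
      rw [ccomm j i]; ring
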